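/- For the single-relay channel, the joint compression-message decoding rate equals the successive compression-message decoding rate: the supremum over all distributions p(x_0)p(x_1)p(ŷ_1|y_1,x_1) of [ I(X_0; Ŷ_1, Y_2 | X_1) − max{0, I(Y_1; Ŷ_1 | X_1, Y_2) − I(X_1; Y_2)} ] equals the supremum, over all such distributions additionally satisfying I(Y_1; Ŷ_1 | X_1, Y_2) ≤ I(X_1; Y_2), of I(X_0; Ŷ_1, Y_2 | X_1). -/

import Mathlib

open scoped BigOperators

/-- Shannon entropy (natural log) of a random variable `X` on a finite sample
space `Ω` with probability mass function `μ`. -/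
noncomputable def entropy {Ω α : Type*} [Fintype Ω] [Fintype α] [DecidableEq α]
    (μ : Ω → ℝ) (X : Ω → α) : ℝ :=
  ∑ a : α, Real.negMulLog (∑ ω ∈ Finset.univ.filter (fun ω => X ω = a), μ ω)

/-- Conditional mutual information `I(X;Y|Z)` for random variables on a finite
sample space with pmf `μ`. -/
noncomputable def condMI {Ω α β γ : Type*} [Fintype Ω]
    [Fintype α] [DecidableEq α] [Fintype β] [DecidableEq β] [Fintype γ] [DecidableEq γ]
    (μ : Ω → ℝ) (X : Ω → α) (Y : Ω → β) (Z : Ω → γ) : ℝ :=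
  entropy μ (fun ω => (X ω, Z ω)) + entropy μ (fun ω => (Y ω, Z ω))
    - entropy μ (fun ω => (X ω, Y ω, Z ω)) - entropy μ Z

/-- (Unconditional) mutual information `I(X;Y)`. -/
noncomputable def mutualInfo {Ω α β : Type*} [Fintype Ω]
    [Fintype α] [DecidableEq α] [Fintype β] [DecidableEq β]
    (μ : Ω → ℝ) (X : Ω → α) (Y : Ω → β) : ℝ :=
  condMI μ X Y (fun _ => (() : Unit))

section SingleRelay

/- Alphabets of `X₀, X₁, Y₁, Y₂, Ŷ₁`. -/
variable {X0A X1A Y1A Y2A Yh1A : Type}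
  [Fintype X0A] [DecidableEq X0A] [Fintype X1A] [DecidableEq X1A]
  [Fintype Y1A] [DecidableEq Y1A] [Fintype Y2A] [DecidableEq Y2A]
  [Fintype Yh1A] [DecidableEq Yh1A]

/-- The joint pmf of `(X₀, X₁, Y₁, Y₂, Ŷ₁)`:
`p(x₀)p(x₁)p(y₁,y₂|x₀,x₁)p(ŷ₁|y₁,x₁)`. -/
noncomputable def muSR (p0 : X0A → ℝ) (p1 : X1A → ℝ)
    (W : X0A → X1A → Y1A × Y2A → ℝ) (κ : Y1A → X1A → Yh1A → ℝ) :
    X0A × X1A × Y1A × Y2A × Yh1A → ℝ :=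
  fun ω => p0 ω.1 * p1 ω.2.1 * W ω.1 ω.2.1 (ω.2.2.1, ω.2.2.2.1)
    * κ ω.2.2.1 ω.2.1 ω.2.2.2.2

variable (X0A X1A Y1A Y2A Yh1A) in
/-- `X₀`. -/
def srX0 : X0A × X1A × Y1A × Y2A × Yh1A → X0A := fun ω => ω.1

variable (X0A X1A Y1A Y2A Yh1A) in
/-- `X₁`. -/
def srX1 : X0A × X1A × Y1A × Y2A × Yh1A → X1A := fun ω => ω.2.1

variable (X0A X1A Y1A Y2A Yh1A) in
/-- `Y₁`. -/
def srY1 : X0A × X1A × Y1A × Y2A × Yh1A → Y1A := fun ω => ω.2.2.1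

variable (X0A X1A Y1A Y2A Yh1A) in
/-- `Y₂`. -/
def srY2 : X0A × X1A × Y1A × Y2A × Yh1A → Y2A := fun ω => ω.2.2.2.1

variable (X0A X1A Y1A Y2A Yh1A) in
/-- `Ŷ₁`. -/
def srYh1 : X0A × X1A × Y1A × Y2A × Yh1A → Yh1A := fun ω => ω.2.2.2.2

end SingleRelay

/-!
Every distribution meeting the constraint `I(Y₁; Ŷ₁ | X₁, Y₂) ≤ I(X₁; Y₂)` has penalty zero, so the
successive rates are joint rates. Conversely, if the constraint fails for a kernel `κ`, time-share
`κ` with a constant compression (`Ŷ₁ = ŷ₀` with probability `1 - t`). Along `t ∈ [0, 1]` the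
Wyner–Ziv rate `I(Y₁; Ŷ₁ | X₁, Y₂)` moves continuously from `0` to its value at `κ`, so it equals
`I(X₁; Y₂)`, which does not depend on the kernel, for some `t`. Since `Ŷ₁` depends on the rest
only through `(Y₁, X₁)`,
`I(X₀; Ŷ₁, Y₂ | X₁) - I(Y₁; Ŷ₁ | X₁, Y₂) = I(X₀; Y₂ | X₁) - I(Y₁; Ŷ₁ | X₀, X₁, Y₂)`.
Here `I(X₀; Y₂ | X₁)` does not depend on the kernel, and `I(Y₁; Ŷ₁ | X₀, X₁, Y₂)` is convex in
the kernel and vanishes for a constant one, so it does not increase under time sharing. Hence the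
time-shared kernel satisfies the constraint and its rate is at least the penalized rate of `κ`.
-/

open Finset Real

section Law

variable {Ω α : Type*} [Fintype Ω] [DecidableEq α]

noncomputable def law (μ : Ω → ℝ) (X : Ω → α) (a : α) : ℝ :=
  ∑ ω ∈ univ.filter (fun ω => X ω = a), μ ω

lemma law_nonneg {μ : Ω → ℝ} (hμ : ∀ ω, 0 ≤ μ ω) (X : Ω → α) (a : α) : 0 ≤ law μ X a :=
  sum_nonneg fun ω _ => hμ ω

lemma le_law_apply {μ : Ω → ℝ} (hμ : ∀ ω, 0 ≤ μ ω) (X : Ω → α) (ω : Ω) :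
    μ ω ≤ law μ X (X ω) :=
  single_le_sum (fun ω _ => hμ ω) (mem_filter.2 ⟨mem_univ ω, rfl⟩)

lemma law_mix (μ₀ μ₁ : Ω → ℝ) (t : ℝ) (X : Ω → α) (a : α) :
    law (fun ω => t * μ₁ ω + (1 - t) * μ₀ ω) X a = t * law μ₁ X a + (1 - t) * law μ₀ X a := by
  simp only [law, sum_add_distrib, mul_sum]

variable [Fintype α]

lemma sum_law_mul (μ : Ω → ℝ) (X : Ω → α) (g : α → ℝ) :
    ∑ a, law μ X a * g a = ∑ ω, μ ω * g (X ω) := by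
  rw [← sum_fiberwise univ X fun ω => μ ω * g (X ω)]
  refine sum_congr rfl fun a _ => ?_
  rw [law, sum_mul]
  exact sum_congr rfl fun ω hω => by rw [(mem_filter.1 hω).2]

lemma sum_law (μ : Ω → ℝ) (X : Ω → α) : ∑ a, law μ X a = ∑ ω, μ ω := by
  simpa using sum_law_mul μ X 1

lemma law_eq_sum_law_prod {β : Type*} [Fintype β] [DecidableEq β] (μ : Ω → ℝ) (X : Ω → α)
    (Z : Ω → β) (z : β) : law μ Z z = ∑ x, law μ (fun ω => (X ω, Z ω)) (x, z) := by
  simp only [law, sum_filter]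
  rw [sum_comm]
  refine sum_congr rfl fun ω _ => ?_
  simp [Prod.ext_iff, ite_and]

lemma sum_mul_div_law_le (μ : Ω → ℝ) (X : Ω → α) {g : α → ℝ} (hg : ∀ a, 0 ≤ g a) :
    ∑ ω, μ ω * (g (X ω) / law μ X (X ω)) ≤ ∑ a, g a := by
  rw [← sum_law_mul μ X fun a => g a / law μ X a]
  refine sum_le_sum fun a _ => ?_
  rcases eq_or_ne (law μ X a) 0 with h | h
  · simp [h, hg a]
  · rw [mul_div_cancel₀ _ h]

end Law

section Entropy

variable {Ω α β γ : Type*} [Fintype Ω] [Fintype α] [DecidableEq α] [Fintype β] [DecidableEq β]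
  [Fintype γ] [DecidableEq γ]

lemma entropy_eq_sum_negMulLog_law (μ : Ω → ℝ) (X : Ω → α) :
    entropy μ X = ∑ a, negMulLog (law μ X a) := rfl

lemma entropy_eq_neg_sum_mul_log_law (μ : Ω → ℝ) (X : Ω → α) :
    entropy μ X = -∑ ω, μ ω * log (law μ X (X ω)) := by
  calc entropy μ X = ∑ a, law μ X a * -log (law μ X a) := by simp [entropy, law, negMulLog]
    _ = _ := by simp [sum_law_mul]

lemma entropy_congr_ae {μ : Ω → ℝ} {X : Ω → α} {Y : Ω → β}
    (h : ∀ ω ω', μ ω ≠ 0 → μ ω' ≠ 0 → (X ω' = X ω ↔ Y ω' = Y ω)) :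
    entropy μ X = entropy μ Y := by
  simp only [entropy_eq_neg_sum_mul_log_law]
  congr 1
  refine sum_congr rfl fun ω _ => ?_
  rcases eq_or_ne (μ ω) 0 with hω | hω
  · simp [hω]
  · have hlaw : law μ X (X ω) = law μ Y (Y ω) := by
      simp only [law, sum_filter]
      refine sum_congr rfl fun ω' _ => ?_
      rcases eq_or_ne (μ ω') 0 with hω' | hω'
      · simp [hω']
      · exact if_congr (h ω ω' hω hω') rfl rfl
    rw [hlaw]

lemma entropy_congr {μ : Ω → ℝ} {X : Ω → α} {Y : Ω → β}
    (h : ∀ ω ω', X ω' = X ω ↔ Y ω' = Y ω) : entropy μ X = entropy μ Y :=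
  entropy_congr_ae fun ω ω' _ _ => h ω ω'

lemma continuous_entropy {T : Type*} [TopologicalSpace T] {μ : T → Ω → ℝ}
    (hμ : ∀ ω, Continuous fun t => μ t ω) (X : Ω → α) : Continuous fun t => entropy (μ t) X :=
  continuous_finsetSum _ fun _ _ =>
    continuous_negMulLog.comp (continuous_finsetSum _ fun ω _ => hμ ω)

lemma continuous_condMI {T : Type*} [TopologicalSpace T] {μ : T → Ω → ℝ}
    (hμ : ∀ ω, Continuous fun t => μ t ω) (X : Ω → α) (Y : Ω → β) (Z : Ω → γ) :
    Continuous fun t => condMI (μ t) X Y Z :=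
  (((continuous_entropy hμ _).add (continuous_entropy hμ _)).sub
    (continuous_entropy hμ _)).sub (continuous_entropy hμ _)

lemma condMI_eq_zero_of_ae_eq_const {μ : Ω → ℝ} (X : Ω → α) {Y : Ω → β} (Z : Ω → γ) {c : β}
    (hY : ∀ ω, μ ω ≠ 0 → Y ω = c) : condMI μ X Y Z = 0 := by
  have hYZ : entropy μ (fun ω => (Y ω, Z ω)) = entropy μ Z :=
    entropy_congr_ae fun ω ω' hω hω' => by simp [hY ω hω, hY ω' hω']
  have hXYZ : entropy μ (fun ω => (X ω, Y ω, Z ω)) = entropy μ (fun ω => (X ω, Z ω)) :=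
    entropy_congr_ae fun ω ω' hω hω' => by simp [hY ω hω, hY ω' hω']
  rw [condMI, hYZ, hXYZ]
  ring

lemma log_add_log_sub_log_sub_log_le {a b c d : ℝ} (ha : 0 < a) (hb : 0 < b) (hc : 0 < c)
    (hd : 0 < d) : log a + log b - log c - log d ≤ a * b / d / c - 1 := by
  have := log_le_sub_one_of_pos (div_pos (div_pos (mul_pos ha hb) hd) hc)
  rw [log_div (by positivity) hc.ne', log_div (by positivity) hd.ne',
    log_mul ha.ne' hb.ne'] at this
  linarith

lemma sum_law_mul_law_div_law (μ : Ω → ℝ) (X : Ω → α) (Y : Ω → β) (Z : Ω → γ) :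
    ∑ p : α × β × γ, law μ (fun ω => (X ω, Z ω)) (p.1, p.2.2) *
        law μ (fun ω => (Y ω, Z ω)) (p.2.1, p.2.2) / law μ Z p.2.2 = ∑ ω, μ ω := by
  simp only [Fintype.sum_prod_type]
  rw [← sum_law μ Z, ← sum_congr rfl fun x _ => sum_comm, sum_comm]
  refine sum_congr rfl fun z _ => ?_
  calc _ = (∑ x, law μ (fun ω => (X ω, Z ω)) (x, z)) *
        (∑ y, law μ (fun ω => (Y ω, Z ω)) (y, z)) / law μ Z z := by
        rw [sum_mul_sum, sum_div]
        simp only [sum_div]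
    _ = law μ Z z := by rw [← law_eq_sum_law_prod, ← law_eq_sum_law_prod, mul_self_div_self]

/-- `log x ≤ x - 1` at `x = p(x, z) p(y, z) / (p(z) p(x, y, z))`, and these ratios have
`μ`-integral at most the total mass. -/
theorem condMI_nonneg {μ : Ω → ℝ} (hμ : ∀ ω, 0 ≤ μ ω) (X : Ω → α) (Y : Ω → β) (Z : Ω → γ) :
    0 ≤ condMI μ X Y Z := by
  have hpoint : ∀ ω, μ ω * (log (law μ (fun ω => (X ω, Z ω)) (X ω, Z ω))
        + log (law μ (fun ω => (Y ω, Z ω)) (Y ω, Z ω))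
        - log (law μ (fun ω => (X ω, Y ω, Z ω)) (X ω, Y ω, Z ω)) - log (law μ Z (Z ω)))
      ≤ μ ω * (law μ (fun ω => (X ω, Z ω)) (X ω, Z ω) * law μ (fun ω => (Y ω, Z ω)) (Y ω, Z ω)
          / law μ Z (Z ω) / law μ (fun ω => (X ω, Y ω, Z ω)) (X ω, Y ω, Z ω)) - μ ω := by
    intro ω
    rcases (hμ ω).eq_or_lt with h | h
    · simp [← h]
    rw [← mul_sub_one]
    exact mul_le_mul_of_nonneg_left (log_add_log_sub_log_sub_log_le
      (h.trans_le (le_law_apply hμ _ ω)) (h.trans_le (le_law_apply hμ _ ω))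
      (h.trans_le (le_law_apply hμ _ ω)) (h.trans_le (le_law_apply hμ _ ω))) h.le
  have hratio := sum_law_mul_law_div_law μ X Y Z ▸
    sum_mul_div_law_le μ (fun ω => (X ω, Y ω, Z ω)) fun _ =>
      div_nonneg (mul_nonneg (law_nonneg hμ _ _) (law_nonneg hμ _ _)) (law_nonneg hμ _ _)
  dsimp only at hratio
  have := sum_le_sum fun ω (_ : ω ∈ univ) => hpoint ω
  simp only [mul_add, mul_sub, sum_add_distrib, sum_sub_distrib] at this
  simp only [condMI, entropy_eq_neg_sum_mul_log_law]
  linarith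

noncomputable def condEntropy (μ : Ω → ℝ) (X : Ω → α) (W : Ω → β) : ℝ :=
  entropy μ (fun ω => (X ω, W ω)) - entropy μ W

lemma condMI_eq_condEntropy_sub_condEntropy (μ : Ω → ℝ) (X : Ω → α) (Y : Ω → β) (Z : Ω → γ) :
    condMI μ X Y Z = condEntropy μ X Z - condEntropy μ X (fun ω => (Y ω, Z ω)) := by
  rw [condMI, condEntropy, condEntropy]
  ring

/-- Expand `I(X, Y; U | Z, V)` by the chain rule in both orders; the hypothesis kills
`I(X; U | Y, Z, V)`. -/
theorem condMI_prod_sub_condMI_eq_of_condMI_eq_zero {δ ε : Type*} [Fintype δ] [DecidableEq δ]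
    [Fintype ε] [DecidableEq ε] (μ : Ω → ℝ) (X : Ω → α) (Y : Ω → β) (Z : Ω → γ) (V : Ω → δ)
    (U : Ω → ε) (hU : condMI μ U X (fun ω => (Y ω, Z ω, V ω)) = 0) :
    condMI μ X (fun ω => (U ω, V ω)) Z - condMI μ Y U (fun ω => (Z ω, V ω)) =
      condMI μ X V Z - condMI μ Y U (fun ω => (X ω, Z ω, V ω)) := by
  have h₁ : entropy μ (fun ω => ((U ω, V ω), Z ω)) = entropy μ (fun ω => (U ω, Z ω, V ω)) :=
    entropy_congr fun _ _ => by simp only [Prod.mk.injEq]; tauto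
  have h₂ : entropy μ (fun ω => (X ω, (U ω, V ω), Z ω)) =
      entropy μ (fun ω => (U ω, X ω, Z ω, V ω)) :=
    entropy_congr fun _ _ => by simp only [Prod.mk.injEq]; tauto
  have h₃ : entropy μ (fun ω => (Z ω, V ω)) = entropy μ (fun ω => (V ω, Z ω)) :=
    entropy_congr fun _ _ => by simp only [Prod.mk.injEq]; tauto
  have h₄ : entropy μ (fun ω => (X ω, V ω, Z ω)) = entropy μ (fun ω => (X ω, Z ω, V ω)) :=
    entropy_congr fun _ _ => by simp only [Prod.mk.injEq]; tauto
  have h₅ : entropy μ (fun ω => (Y ω, U ω, Z ω, V ω)) =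
      entropy μ (fun ω => (U ω, Y ω, Z ω, V ω)) :=
    entropy_congr fun _ _ => by simp only [Prod.mk.injEq]; tauto
  have h₆ : entropy μ (fun ω => (Y ω, X ω, Z ω, V ω)) =
      entropy μ (fun ω => (X ω, Y ω, Z ω, V ω)) :=
    entropy_congr fun _ _ => by simp only [Prod.mk.injEq]; tauto
  have h₇ : entropy μ (fun ω => (Y ω, U ω, X ω, Z ω, V ω)) =
      entropy μ (fun ω => (U ω, X ω, Y ω, Z ω, V ω)) :=
    entropy_congr fun _ _ => by simp only [Prod.mk.injEq]; tauto
  simp only [condMI] at hU ⊢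
  linarith

end Entropy

section Mixture

noncomputable def coinMix {Ω : Type*} (μ₀ μ₁ : Ω → ℝ) (t : ℝ) : Ω × Bool → ℝ :=
  fun p => if p.2 then t * μ₁ p.1 else (1 - t) * μ₀ p.1

lemma coinMix_nonneg {Ω : Type*} {μ₀ μ₁ : Ω → ℝ} (hμ₀ : ∀ ω, 0 ≤ μ₀ ω) (hμ₁ : ∀ ω, 0 ≤ μ₁ ω)
    {t : ℝ} (ht₀ : 0 ≤ t) (ht₁ : t ≤ 1) (p : Ω × Bool) : 0 ≤ coinMix μ₀ μ₁ t p := by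
  unfold coinMix
  split_ifs
  · exact mul_nonneg ht₀ (hμ₁ _)
  · exact mul_nonneg (sub_nonneg.2 ht₁) (hμ₀ _)

variable {Ω α β γ : Type*} [Fintype Ω] [Fintype α] [DecidableEq α] [Fintype β] [DecidableEq β]
  [Fintype γ] [DecidableEq γ]

lemma entropy_coinMix_fst (μ₀ μ₁ : Ω → ℝ) (t : ℝ) (X : Ω → α) :
    entropy (coinMix μ₀ μ₁ t) (fun p => X p.1) =
      entropy (fun ω => t * μ₁ ω + (1 - t) * μ₀ ω) X := by
  refine sum_congr rfl fun a _ => congrArg negMulLog ?_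
  simp only [sum_filter, Fintype.sum_prod_type, Fintype.sum_bool, coinMix]
  simp [ite_add_zero]

lemma entropy_coinMix_prod_coin (μ₀ μ₁ : Ω → ℝ) (t : ℝ) (X : Ω → α) :
    entropy (coinMix μ₀ μ₁ t) (fun p => (X p.1, p.2)) = t * entropy μ₁ X + (1 - t) * entropy μ₀ X
      + ((∑ ω, μ₁ ω) * negMulLog t + (∑ ω, μ₀ ω) * negMulLog (1 - t)) := by
  have hlaw (a : α) (b : Bool) : law (coinMix μ₀ μ₁ t) (fun p => (X p.1, p.2)) (a, b) =
      if b then t * law μ₁ X a else (1 - t) * law μ₀ X a := by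
    cases b <;> simp [law, sum_filter, Fintype.sum_prod_type, coinMix, mul_sum]
  simp only [entropy_eq_sum_negMulLog_law, Fintype.sum_prod_type, Fintype.sum_bool, hlaw]
  simp only [if_true, Bool.false_eq_true, if_false, negMulLog_mul, sum_add_distrib, ← sum_mul,
    ← mul_sum, sum_law]
  ring

theorem mul_condEntropy_add_mul_condEntropy_le {μ₀ μ₁ : Ω → ℝ} (hμ₀ : ∀ ω, 0 ≤ μ₀ ω)
    (hμ₁ : ∀ ω, 0 ≤ μ₁ ω) {t : ℝ} (ht₀ : 0 ≤ t) (ht₁ : t ≤ 1) (X : Ω → α) (W : Ω → β) :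
    t * condEntropy μ₁ X W + (1 - t) * condEntropy μ₀ X W ≤
      condEntropy (fun ω => t * μ₁ ω + (1 - t) * μ₀ ω) X W := by
  -- conditioning on the coin as well can only decrease the conditional entropy
  have h := condMI_nonneg (coinMix_nonneg hμ₀ hμ₁ ht₀ ht₁) (fun p => X p.1) (fun p => p.2)
    (fun p => W p.1)
  have hcomm : entropy (coinMix μ₀ μ₁ t) (fun p => (p.2, W p.1)) =
      entropy (coinMix μ₀ μ₁ t) (fun p => (W p.1, p.2)) :=
    entropy_congr fun _ _ => by simp only [Prod.mk.injEq]; tauto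
  have hassoc : entropy (coinMix μ₀ μ₁ t) (fun p => (X p.1, p.2, W p.1)) =
      entropy (coinMix μ₀ μ₁ t) (fun p => ((X p.1, W p.1), p.2)) :=
    entropy_congr fun _ _ => by simp only [Prod.mk.injEq]; tauto
  rw [condMI, hcomm, hassoc, entropy_coinMix_prod_coin,
    entropy_coinMix_prod_coin μ₀ μ₁ t fun ω => (X ω, W ω),
    entropy_coinMix_fst μ₀ μ₁ t fun ω => (X ω, W ω), entropy_coinMix_fst] at h
  simp only [condEntropy]
  linarith

lemma entropy_mix_of_law_eq {μ₀ μ₁ : Ω → ℝ} {X : Ω → α} (h : law μ₀ X = law μ₁ X) (t : ℝ) :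
    entropy (fun ω => t * μ₁ ω + (1 - t) * μ₀ ω) X = entropy μ₁ X := by
  simp only [entropy_eq_sum_negMulLog_law, law_mix, h]
  ring_nf

theorem condMI_mix_le {μ₀ μ₁ : Ω → ℝ} (hμ₀ : ∀ ω, 0 ≤ μ₀ ω) (hμ₁ : ∀ ω, 0 ≤ μ₁ ω) {t : ℝ}
    (ht₀ : 0 ≤ t) (ht₁ : t ≤ 1) {X : Ω → α} (Y : Ω → β) {Z : Ω → γ}
    (hXZ : law μ₀ (fun ω => (X ω, Z ω)) = law μ₁ (fun ω => (X ω, Z ω))) :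
    condMI (fun ω => t * μ₁ ω + (1 - t) * μ₀ ω) X Y Z ≤
      t * condMI μ₁ X Y Z + (1 - t) * condMI μ₀ X Y Z := by
  have hZ : law μ₀ Z = law μ₁ Z :=
    funext fun z => by rw [law_eq_sum_law_prod μ₀ X, law_eq_sum_law_prod μ₁ X, hXZ]
  have hmix : condEntropy (fun ω => t * μ₁ ω + (1 - t) * μ₀ ω) X Z = condEntropy μ₁ X Z := by
    rw [condEntropy, condEntropy, entropy_mix_of_law_eq hXZ, entropy_mix_of_law_eq hZ]
  have h₀ : condEntropy μ₀ X Z = condEntropy μ₁ X Z := by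
    simp only [condEntropy, entropy_eq_sum_negMulLog_law, hXZ, hZ]
  simp only [condMI_eq_condEntropy_sub_condEntropy, hmix, h₀]
  linarith [mul_condEntropy_add_mul_condEntropy_le hμ₀ hμ₁ ht₀ ht₁ X fun ω => (Y ω, Z ω)]

end Mixture

theorem Function.FactorsThrough.prodMk {ι α β γ : Type*} {f : ι → γ} {g : ι → α} {h : ι → β}
    (hg : g.FactorsThrough f) (hh : h.FactorsThrough f) :
    (fun i => (g i, h i)).FactorsThrough f :=
  fun _ _ hf => Prod.ext (hg hf) (hh hf)

section Relay

open Function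

variable {X0A X1A Y1A Y2A Yh1A : Type} {p0 : X0A → ℝ} {p1 : X1A → ℝ}
  {W : X0A → X1A → Y1A × Y2A → ℝ}

local notation "Ω" => X0A × X1A × Y1A × Y2A × Yh1A
local notation "X₀" => srX0 _ _ _ _ _
local notation "X₁" => srX1 _ _ _ _ _
local notation "Y₁" => srY1 _ _ _ _ _
local notation "Y₂" => srY2 _ _ _ _ _
local notation "Ŷ₁" => srYh1 _ _ _ _ _

lemma muSR_nonneg {κ : Y1A → X1A → Yh1A → ℝ} (hp0 : ∀ x, 0 ≤ p0 x) (hp1 : ∀ x, 0 ≤ p1 x)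
    (hW : ∀ x0 x1 y, 0 ≤ W x0 x1 y) (hκ : ∀ y x yh, 0 ≤ κ y x yh) (ω : Ω) :
    0 ≤ muSR p0 p1 W κ ω :=
  mul_nonneg (mul_nonneg (mul_nonneg (hp0 _) (hp1 _)) (hW _ _ _)) (hκ _ _ _)

lemma muSR_mix (κ₀ κ₁ : Y1A → X1A → Yh1A → ℝ) (t : ℝ) :
    muSR p0 p1 W (fun y x yh => t * κ₁ y x yh + (1 - t) * κ₀ y x yh) =
      fun ω => t * muSR p0 p1 W κ₁ ω + (1 - t) * muSR p0 p1 W κ₀ ω := by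
  ext ω
  simp only [muSR]
  ring

def channelVars (ω : Ω) : X0A × X1A × Y1A × Y2A :=
  (ω.1, ω.2.1, ω.2.2.1, ω.2.2.2.1)

lemma factorsThrough_srX0 : (X₀ : Ω → X0A).FactorsThrough channelVars :=
  fun _ _ h => congrArg (·.1) h

lemma factorsThrough_srX1 : (X₁ : Ω → X1A).FactorsThrough channelVars :=
  fun _ _ h => congrArg (·.2.1) h

lemma factorsThrough_srY1 : (Y₁ : Ω → Y1A).FactorsThrough channelVars :=
  fun _ _ h => congrArg (·.2.2.1) h

lemma factorsThrough_srY2 : (Y₂ : Ω → Y2A).FactorsThrough channelVars :=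
  fun _ _ h => congrArg (·.2.2.2) h

section Kernels

variable [DecidableEq Yh1A]

def constKernel (yh₀ : Yh1A) : Y1A → X1A → Yh1A → ℝ :=
  fun _ _ yh => if yh = yh₀ then 1 else 0

noncomputable def timeShare (κ : Y1A → X1A → Yh1A → ℝ) (yh₀ : Yh1A) (t : ℝ) :
    Y1A → X1A → Yh1A → ℝ :=
  fun y x yh => t * κ y x yh + (1 - t) * constKernel yh₀ y x yh

variable {κ : Y1A → X1A → Yh1A → ℝ} {yh₀ : Yh1A} {t : ℝ}

lemma constKernel_nonneg (y : Y1A) (x : X1A) (yh : Yh1A) : 0 ≤ constKernel yh₀ y x yh := by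
  unfold constKernel
  split_ifs <;> norm_num

lemma timeShare_nonneg (hκ : ∀ y x yh, 0 ≤ κ y x yh) (ht₀ : 0 ≤ t) (ht₁ : t ≤ 1) (y : Y1A)
    (x : X1A) (yh : Yh1A) : 0 ≤ timeShare κ yh₀ t y x yh :=
  add_nonneg (mul_nonneg ht₀ (hκ y x yh))
    (mul_nonneg (sub_nonneg.2 ht₁) (constKernel_nonneg y x yh))

lemma timeShare_zero : timeShare κ yh₀ 0 = constKernel yh₀ := by
  ext
  simp [timeShare]

lemma timeShare_one : timeShare κ yh₀ 1 = κ := by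
  ext
  simp [timeShare]

variable [Fintype Yh1A]

lemma sum_constKernel (y : Y1A) (x : X1A) : ∑ yh, constKernel yh₀ y x yh = 1 := by
  simp [constKernel]

lemma sum_timeShare (hκ : ∀ y x, ∑ yh, κ y x yh = 1) (y : Y1A) (x : X1A) :
    ∑ yh, timeShare κ yh₀ t y x yh = 1 := by
  simp [timeShare, sum_add_distrib, ← mul_sum, hκ, sum_constKernel]

end Kernels

variable [Fintype X0A] [Fintype X1A] [Fintype Y1A] [Fintype Y2A] [Fintype Yh1A]

lemma sum_sample (f : Ω → ℝ) :
    ∑ ω, f ω = ∑ s : X0A × X1A × Y1A × Y2A, ∑ yh, f (s.1, s.2.1, s.2.2.1, s.2.2.2, yh) := by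
  simp only [Fintype.sum_prod_type]

lemma law_muSR_eq_sum {κ : Y1A → X1A → Yh1A → ℝ} (hκ : ∀ y x, ∑ yh, κ y x yh = 1) {α : Type*}
    [DecidableEq α] {V : Ω → α} (hV : V.FactorsThrough channelVars) (yh : Yh1A) (v : α) :
    law (muSR p0 p1 W κ) V v = ∑ s : X0A × X1A × Y1A × Y2A,
      if V (s.1, s.2.1, s.2.2.1, s.2.2.2, yh) = v then
        p0 s.1 * p1 s.2.1 * W s.1 s.2.1 (s.2.2.1, s.2.2.2) else 0 := by
  rw [law, sum_filter, sum_sample]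
  refine sum_congr rfl fun s _ => ?_
  have hVs : ∀ yh', V (s.1, s.2.1, s.2.2.1, s.2.2.2, yh') = V (s.1, s.2.1, s.2.2.1, s.2.2.2, yh) :=
    fun _ => hV rfl
  by_cases h : V (s.1, s.2.1, s.2.2.1, s.2.2.2, yh) = v
  · simp [fun yh' => (hVs yh').trans h, muSR, ← mul_sum, hκ]
  · simp [fun yh' => (hVs yh').trans_ne h]

lemma law_muSR_congr_kernel {κ₀ κ₁ : Y1A → X1A → Yh1A → ℝ} (hκ₀ : ∀ y x, ∑ yh, κ₀ y x yh = 1)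
    (hκ₁ : ∀ y x, ∑ yh, κ₁ y x yh = 1) {α : Type*} [DecidableEq α] {V : Ω → α}
    (hV : V.FactorsThrough channelVars) : law (muSR p0 p1 W κ₀) V = law (muSR p0 p1 W κ₁) V :=
  funext fun v => by
    rcases isEmpty_or_nonempty Yh1A with hYh | ⟨⟨yh⟩⟩
    · simp [law]
    · rw [law_muSR_eq_sum hκ₀ hV yh, law_muSR_eq_sum hκ₁ hV yh]

lemma condMI_muSR_congr_kernel {κ₀ κ₁ : Y1A → X1A → Yh1A → ℝ}
    (hκ₀ : ∀ y x, ∑ yh, κ₀ y x yh = 1) (hκ₁ : ∀ y x, ∑ yh, κ₁ y x yh = 1)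
    {α β γ : Type*} [Fintype α] [DecidableEq α] [Fintype β] [DecidableEq β] [Fintype γ]
    [DecidableEq γ] {X : Ω → α} {Y : Ω → β} {Z : Ω → γ} (hX : X.FactorsThrough channelVars)
    (hY : Y.FactorsThrough channelVars) (hZ : Z.FactorsThrough channelVars) :
    condMI (muSR p0 p1 W κ₀) X Y Z = condMI (muSR p0 p1 W κ₁) X Y Z := by
  simp only [condMI, entropy_eq_sum_negMulLog_law, law_muSR_congr_kernel hκ₀ hκ₁ (hX.prodMk hZ),
    law_muSR_congr_kernel hκ₀ hκ₁ (hY.prodMk hZ), law_muSR_congr_kernel hκ₀ hκ₁ hZ,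
    law_muSR_congr_kernel hκ₀ hκ₁ (hX.prodMk (hY.prodMk hZ))]

section CompressionKernel

variable [DecidableEq Yh1A]

lemma law_muSR_srYh1_prod {κ : Y1A → X1A → Yh1A → ℝ} (hκ : ∀ y x, ∑ yh, κ y x yh = 1)
    {α : Type*} [DecidableEq α] {V : Ω → α} (hV : V.FactorsThrough channelVars)
    (r : α → Y1A × X1A) (hr : ∀ ω, r (V ω) = (Y₁ ω, X₁ ω)) (yh : Yh1A) (v : α) :
    law (muSR p0 p1 W κ) (fun ω => (Ŷ₁ ω, V ω)) (yh, v) =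
      κ (r v).1 (r v).2 yh * law (muSR p0 p1 W κ) V v := by
  rw [law_muSR_eq_sum hκ hV yh, mul_sum, law, sum_filter, sum_sample]
  refine sum_congr rfl fun s _ => ?_
  rw [Fintype.sum_eq_single yh fun yh' hne => by simp [srYh1, hne]]
  by_cases h : V (s.1, s.2.1, s.2.2.1, s.2.2.2, yh) = v
  · have hrv : r v = (s.2.2.1, s.2.1) := h ▸ hr _
    simp only [srYh1, h, hrv, muSR, if_true]
    ring
  · simp [srYh1, h]

lemma condEntropy_muSR_srYh1 {κ : Y1A → X1A → Yh1A → ℝ} (hκ : ∀ y x, ∑ yh, κ y x yh = 1)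
    {α : Type*} [Fintype α] [DecidableEq α] {V : Ω → α} (hV : V.FactorsThrough channelVars)
    (r : α → Y1A × X1A) (hr : ∀ ω, r (V ω) = (Y₁ ω, X₁ ω)) :
    condEntropy (muSR p0 p1 W κ) Ŷ₁ V =
      ∑ ω, muSR p0 p1 W κ ω * ∑ yh, negMulLog (κ (Y₁ ω) (X₁ ω) yh) := by
  rw [condEntropy, entropy_eq_sum_negMulLog_law, Fintype.sum_prod_type, sum_comm]
  simp only [law_muSR_srYh1_prod hκ hV r hr, negMulLog_mul, sum_add_distrib, ← sum_mul, ← mul_sum,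
    hκ, one_mul]
  rw [sum_law_mul, entropy_eq_sum_negMulLog_law]
  simp only [hr, add_sub_cancel_right]

lemma condMI_muSR_srYh1_eq_zero {κ : Y1A → X1A → Yh1A → ℝ} (hκ : ∀ y x, ∑ yh, κ y x yh = 1)
    {α β : Type*} [Fintype α] [DecidableEq α] [Fintype β] [DecidableEq β] {X : Ω → α}
    {V : Ω → β} (hX : X.FactorsThrough channelVars) (hV : V.FactorsThrough channelVars)
    (r : β → Y1A × X1A) (hr : ∀ ω, r (V ω) = (Y₁ ω, X₁ ω)) :
    condMI (muSR p0 p1 W κ) Ŷ₁ X V = 0 := by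
  rw [condMI_eq_condEntropy_sub_condEntropy, condEntropy_muSR_srYh1 hκ hV r hr,
    condEntropy_muSR_srYh1 hκ (hX.prodMk hV) (fun v => r v.2) fun ω => hr ω, sub_self]

lemma condMI_muSR_constKernel_eq_zero (yh₀ : Yh1A) {α γ : Type*} [Fintype α] [DecidableEq α]
    [Fintype γ] [DecidableEq γ] (X : Ω → α) (Z : Ω → γ) :
    condMI (muSR p0 p1 W (constKernel yh₀)) X Ŷ₁ Z = 0 :=
  condMI_eq_zero_of_ae_eq_const (c := yh₀) X Z fun ω hω => by
    by_contra h
    exact hω (by simp [muSR, constKernel, show ω.2.2.2.2 ≠ yh₀ from h])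

end CompressionKernel

variable [DecidableEq X0A] [DecidableEq X1A] [DecidableEq Y1A] [DecidableEq Y2A]
  [DecidableEq Yh1A]

noncomputable def cfRate (p0 : X0A → ℝ) (p1 : X1A → ℝ) (W : X0A → X1A → Y1A × Y2A → ℝ)
    (κ : Y1A → X1A → Yh1A → ℝ) : ℝ :=
  condMI (muSR p0 p1 W κ) X₀ (fun ω => (Ŷ₁ ω, Y₂ ω)) X₁

noncomputable def wynerZivRate (p0 : X0A → ℝ) (p1 : X1A → ℝ) (W : X0A → X1A → Y1A × Y2A → ℝ)
    (κ : Y1A → X1A → Yh1A → ℝ) : ℝ :=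
  condMI (muSR p0 p1 W κ) Y₁ Ŷ₁ (fun ω => (X₁ ω, Y₂ ω))

noncomputable def relayLinkRate (p0 : X0A → ℝ) (p1 : X1A → ℝ) (W : X0A → X1A → Y1A × Y2A → ℝ)
    (κ : Y1A → X1A → Yh1A → ℝ) : ℝ :=
  mutualInfo (muSR p0 p1 W κ) X₁ Y₂

variable {κ : Y1A → X1A → Yh1A → ℝ}

lemma cfRate_sub_wynerZivRate (hκ : ∀ y x, ∑ yh, κ y x yh = 1) :
    cfRate p0 p1 W κ - wynerZivRate p0 p1 W κ =
      condMI (muSR p0 p1 W κ) X₀ Y₂ X₁ -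
        condMI (muSR p0 p1 W κ) Y₁ Ŷ₁ (fun ω => (X₀ ω, X₁ ω, Y₂ ω)) :=
  condMI_prod_sub_condMI_eq_of_condMI_eq_zero _ X₀ Y₁ X₁ Y₂ Ŷ₁ <|
    condMI_muSR_srYh1_eq_zero hκ factorsThrough_srX0
      (factorsThrough_srY1.prodMk (factorsThrough_srX1.prodMk factorsThrough_srY2))
      (fun v => (v.1, v.2.1)) fun _ => rfl

lemma condMI_muSR_timeShare_le (hp0 : ∀ x, 0 ≤ p0 x) (hp1 : ∀ x, 0 ≤ p1 x)
    (hW : ∀ x0 x1 y, 0 ≤ W x0 x1 y) (hκ : ∀ y x yh, 0 ≤ κ y x yh)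
    (hκs : ∀ y x, ∑ yh, κ y x yh = 1) (yh₀ : Yh1A) {t : ℝ} (ht₀ : 0 ≤ t) (ht₁ : t ≤ 1) :
    condMI (muSR p0 p1 W (timeShare κ yh₀ t)) Y₁ Ŷ₁ (fun ω => (X₀ ω, X₁ ω, Y₂ ω)) ≤
      condMI (muSR p0 p1 W κ) Y₁ Ŷ₁ (fun ω => (X₀ ω, X₁ ω, Y₂ ω)) := by
  unfold timeShare
  rw [muSR_mix]
  calc _ ≤ t * condMI (muSR p0 p1 W κ) Y₁ Ŷ₁ (fun ω => (X₀ ω, X₁ ω, Y₂ ω)) +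
        (1 - t) * condMI (muSR p0 p1 W (constKernel yh₀)) Y₁ Ŷ₁ (fun ω => (X₀ ω, X₁ ω, Y₂ ω)) :=
        condMI_mix_le (muSR_nonneg hp0 hp1 hW constKernel_nonneg) (muSR_nonneg hp0 hp1 hW hκ)
          ht₀ ht₁ _ <| law_muSR_congr_kernel sum_constKernel hκs <| factorsThrough_srY1.prodMk <|
            factorsThrough_srX0.prodMk (factorsThrough_srX1.prodMk factorsThrough_srY2)
    _ ≤ _ := by
      rw [condMI_muSR_constKernel_eq_zero, mul_zero, add_zero]
      exact mul_le_of_le_one_left (condMI_nonneg (muSR_nonneg hp0 hp1 hW hκ) _ _ _) ht₁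

omit [DecidableEq X0A] in
lemma exists_wynerZivRate_timeShare_eq (κ : Y1A → X1A → Yh1A → ℝ) (yh₀ : Yh1A) {c : ℝ}
    (hc₀ : 0 ≤ c) (hc : c ≤ wynerZivRate p0 p1 W κ) :
    ∃ t ∈ Set.Icc (0 : ℝ) 1, wynerZivRate p0 p1 W (timeShare κ yh₀ t) = c := by
  have hcont : Continuous fun t => wynerZivRate p0 p1 W (timeShare κ yh₀ t) :=
    continuous_condMI (fun ω => by simp only [muSR, timeShare]; fun_prop) _ _ _
  refine intermediate_value_Icc zero_le_one hcont.continuousOn ⟨?_, ?_⟩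
  · rwa [timeShare_zero, wynerZivRate, condMI_muSR_constKernel_eq_zero]
  · rwa [timeShare_one]

theorem exists_kernel_wynerZivRate_le [Nonempty Yh1A] (hp0 : ∀ x, 0 ≤ p0 x)
    (hp1 : ∀ x, 0 ≤ p1 x) (hW : ∀ x0 x1 y, 0 ≤ W x0 x1 y) (hκ : ∀ y x yh, 0 ≤ κ y x yh)
    (hκs : ∀ y x, ∑ yh, κ y x yh = 1) :
    ∃ κ' : Y1A → X1A → Yh1A → ℝ, (∀ y x yh, 0 ≤ κ' y x yh) ∧ (∀ y x, ∑ yh, κ' y x yh = 1) ∧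
      wynerZivRate p0 p1 W κ' ≤ relayLinkRate p0 p1 W κ' ∧
      cfRate p0 p1 W κ - max 0 (wynerZivRate p0 p1 W κ - relayLinkRate p0 p1 W κ) ≤
        cfRate p0 p1 W κ' := by
  rcases le_or_gt (wynerZivRate p0 p1 W κ) (relayLinkRate p0 p1 W κ) with hle | hlt
  · exact ⟨κ, hκ, hκs, hle, by rw [max_eq_left (sub_nonpos.2 hle), sub_zero]⟩
  obtain ⟨yh₀⟩ := ‹Nonempty Yh1A›
  obtain ⟨t, ⟨ht₀, ht₁⟩, ht⟩ :=
    exists_wynerZivRate_timeShare_eq (c := relayLinkRate p0 p1 W κ) κ yh₀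
      (condMI_nonneg (muSR_nonneg hp0 hp1 hW hκ) _ _ _) hlt.le
  have hκts : ∀ y x, ∑ yh, timeShare κ yh₀ t y x yh = 1 := sum_timeShare hκs
  have hlink : relayLinkRate p0 p1 W (timeShare κ yh₀ t) = relayLinkRate p0 p1 W κ :=
    condMI_muSR_congr_kernel hκts hκs factorsThrough_srX1 factorsThrough_srY2 fun _ _ _ => rfl
  have hdirect : condMI (muSR p0 p1 W (timeShare κ yh₀ t)) X₀ Y₂ X₁ =
      condMI (muSR p0 p1 W κ) X₀ Y₂ X₁ :=
    condMI_muSR_congr_kernel hκts hκs factorsThrough_srX0 factorsThrough_srY2 factorsThrough_srX1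
  refine ⟨timeShare κ yh₀ t, timeShare_nonneg hκ ht₀ ht₁, hκts, (ht.trans hlink.symm).le, ?_⟩
  rw [max_eq_right (sub_nonneg.2 hlt.le)]
  linarith [cfRate_sub_wynerZivRate (p0 := p0) (p1 := p1) (W := W) hκs,
    cfRate_sub_wynerZivRate (p0 := p0) (p1 := p1) (W := W) hκts,
    condMI_muSR_timeShare_le hp0 hp1 hW hκ hκs yh₀ ht₀ ht₁]

end Relay
theorem single_relay_joint_eq_successive_general
    {X0A X1A Y1A Y2A Yh1A : Type}
    [Fintype X0A] [DecidableEq X0A] [Fintype X1A] [DecidableEq X1A]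
    [Fintype Y1A] [DecidableEq Y1A] [Fintype Y2A] [DecidableEq Y2A]
    [Fintype Yh1A] [DecidableEq Yh1A]
    [Nonempty Yh1A]
    (W : X0A → X1A → Y1A × Y2A → ℝ)
    (hW : ∀ x0 x1 y, 0 ≤ W x0 x1 y) :
    sSup { r : ℝ | ∃ (p0 : X0A → ℝ) (p1 : X1A → ℝ) (κ : Y1A → X1A → Yh1A → ℝ),
        (∀ x, 0 ≤ p0 x) ∧ (∑ x, p0 x = 1) ∧
        (∀ x, 0 ≤ p1 x) ∧ (∑ x, p1 x = 1) ∧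
        (∀ y x yh, 0 ≤ κ y x yh) ∧ (∀ y x, ∑ yh, κ y x yh = 1) ∧
        r = condMI (muSR p0 p1 W κ) (srX0 X0A X1A Y1A Y2A Yh1A)
              (fun ω => (srYh1 X0A X1A Y1A Y2A Yh1A ω, srY2 X0A X1A Y1A Y2A Yh1A ω))
              (srX1 X0A X1A Y1A Y2A Yh1A)
            - max 0
              (condMI (muSR p0 p1 W κ) (srY1 X0A X1A Y1A Y2A Yh1A)
                  (srYh1 X0A X1A Y1A Y2A Yh1A)
                  (fun ω => (srX1 X0A X1A Y1A Y2A Yh1A ω, srY2 X0A X1A Y1A Y2A Yh1A ω))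
                - mutualInfo (muSR p0 p1 W κ) (srX1 X0A X1A Y1A Y2A Yh1A)
                    (srY2 X0A X1A Y1A Y2A Yh1A)) } =
    sSup { r : ℝ | ∃ (p0 : X0A → ℝ) (p1 : X1A → ℝ) (κ : Y1A → X1A → Yh1A → ℝ),
        (∀ x, 0 ≤ p0 x) ∧ (∑ x, p0 x = 1) ∧
        (∀ x, 0 ≤ p1 x) ∧ (∑ x, p1 x = 1) ∧
        (∀ y x yh, 0 ≤ κ y x yh) ∧ (∀ y x, ∑ yh, κ y x yh = 1) ∧
        condMI (muSR p0 p1 W κ) (srY1 X0A X1A Y1A Y2A Yh1A)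
            (srYh1 X0A X1A Y1A Y2A Yh1A)
            (fun ω => (srX1 X0A X1A Y1A Y2A Yh1A ω, srY2 X0A X1A Y1A Y2A Yh1A ω))
          ≤ mutualInfo (muSR p0 p1 W κ) (srX1 X0A X1A Y1A Y2A Yh1A)
              (srY2 X0A X1A Y1A Y2A Yh1A) ∧
        r = condMI (muSR p0 p1 W κ) (srX0 X0A X1A Y1A Y2A Yh1A)
              (fun ω => (srYh1 X0A X1A Y1A Y2A Yh1A ω, srY2 X0A X1A Y1A Y2A Yh1A ω))
              (srX1 X0A X1A Y1A Y2A Yh1A) } := by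
  apply csSup_eq_csSup_of_forall_exists_le
  · rintro _ ⟨p0, p1, κ, hp0, hp0s, hp1, hp1s, hκ, hκs, rfl⟩
    obtain ⟨κ', hκ', hκs', hle, hrate⟩ := exists_kernel_wynerZivRate_le hp0 hp1 hW hκ hκs
    exact ⟨_, ⟨p0, p1, κ', hp0, hp0s, hp1, hp1s, hκ', hκs', hle, rfl⟩, hrate⟩
  · rintro _ ⟨p0, p1, κ, hp0, hp0s, hp1, hp1s, hκ, hκs, hle, rfl⟩
    exact ⟨_, ⟨p0, p1, κ, hp0, hp0s, hp1, hp1s, hκ, hκs, rfl⟩,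
      by rw [max_eq_left (sub_nonpos.2 hle), sub_zero]⟩

/-- For the single-relay channel, the joint compression-message
decoding rate equals the successive compression-message decoding rate:
`sup_{p(x₀)p(x₁)p(ŷ₁|y₁,x₁)} [ I(X₀; Ŷ₁, Y₂ | X₁) − max{0, I(Y₁; Ŷ₁ | X₁, Y₂) − I(X₁; Y₂)} ]`
equals the supremum, over all such distributions additionally satisfying
`I(Y₁; Ŷ₁ | X₁, Y₂) ≤ I(X₁; Y₂)`, of `I(X₀; Ŷ₁, Y₂ | X₁)`. -/
theorem single_relay_joint_eq_successive
    {X0A X1A Y1A Y2A Yh1A : Type}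
    [Fintype X0A] [DecidableEq X0A] [Fintype X1A] [DecidableEq X1A]
    [Fintype Y1A] [DecidableEq Y1A] [Fintype Y2A] [DecidableEq Y2A]
    [Fintype Yh1A] [DecidableEq Yh1A]
    [Nonempty X0A] [Nonempty X1A] [Nonempty Y1A] [Nonempty Y2A] [Nonempty Yh1A]
    (W : X0A → X1A → Y1A × Y2A → ℝ)
    (hW : ∀ x0 x1 y, 0 ≤ W x0 x1 y) (hWs : ∀ x0 x1, ∑ y, W x0 x1 y = 1) :
    sSup { r : ℝ | ∃ (p0 : X0A → ℝ) (p1 : X1A → ℝ) (κ : Y1A → X1A → Yh1A → ℝ),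
        (∀ x, 0 ≤ p0 x) ∧ (∑ x, p0 x = 1) ∧
        (∀ x, 0 ≤ p1 x) ∧ (∑ x, p1 x = 1) ∧
        (∀ y x yh, 0 ≤ κ y x yh) ∧ (∀ y x, ∑ yh, κ y x yh = 1) ∧
        r = condMI (muSR p0 p1 W κ) (srX0 X0A X1A Y1A Y2A Yh1A)
              (fun ω => (srYh1 X0A X1A Y1A Y2A Yh1A ω, srY2 X0A X1A Y1A Y2A Yh1A ω))
              (srX1 X0A X1A Y1A Y2A Yh1A)
            - max 0
              (condMI (muSR p0 p1 W κ) (srY1 X0A X1A Y1A Y2A Yh1A)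
                  (srYh1 X0A X1A Y1A Y2A Yh1A)
                  (fun ω => (srX1 X0A X1A Y1A Y2A Yh1A ω, srY2 X0A X1A Y1A Y2A Yh1A ω))
                - mutualInfo (muSR p0 p1 W κ) (srX1 X0A X1A Y1A Y2A Yh1A)
                    (srY2 X0A X1A Y1A Y2A Yh1A)) } =
    sSup { r : ℝ | ∃ (p0 : X0A → ℝ) (p1 : X1A → ℝ) (κ : Y1A → X1A → Yh1A → ℝ),
        (∀ x, 0 ≤ p0 x) ∧ (∑ x, p0 x = 1) ∧
        (∀ x, 0 ≤ p1 x) ∧ (∑ x, p1 x = 1) ∧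
        (∀ y x yh, 0 ≤ κ y x yh) ∧ (∀ y x, ∑ yh, κ y x yh = 1) ∧
        condMI (muSR p0 p1 W κ) (srY1 X0A X1A Y1A Y2A Yh1A)
            (srYh1 X0A X1A Y1A Y2A Yh1A)
            (fun ω => (srX1 X0A X1A Y1A Y2A Yh1A ω, srY2 X0A X1A Y1A Y2A Yh1A ω))
          ≤ mutualInfo (muSR p0 p1 W κ) (srX1 X0A X1A Y1A Y2A Yh1A)
              (srY2 X0A X1A Y1A Y2A Yh1A) ∧
        r = condMI (muSR p0 p1 W κ) (srX0 X0A X1A Y1A Y2A Yh1A)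
              (fun ω => (srYh1 X0A X1A Y1A Y2A Yh1A ω, srY2 X0A X1A Y1A Y2A Yh1A ω))
              (srX1 X0A X1A Y1A Y2A Yh1A) } :=
  single_relay_joint_eq_successive_general W hW
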